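/- arXiv:2501.17877 — 2 statements merged into one kernel-verified Lean document; each statement's English description precedes it below -/
import Mathlib

section
/- Let (X, μ) be a measure space with finite total mass m₀ := μ(X) ∈ (0, ∞), let p be real with 1 < p < 2, and let v : X → ℝ be a function in L^p(μ) with ∫_X v dμ = 0. Then ∫_X |1 + v|^p dμ ≤ μ({x : v(x) ≥ −1}) + ∫_X |v|^p dμ + p · μ({x : v(x) < −1})^{(p−1)/p} · (∫_X |v|^p dμ)^{1/p}. -/
/-!
For `1 ≤ p ≤ 2` and `t ≥ -1` one has `|1 + t| ^ p ≤ 1 + p t + |t| ^ p`: both sides agree at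
`t = 0`, and comparing derivatives reduces the claim to elementary properties of the concave
power `s ↦ s ^ (p - 1)`. For `t < -1` simply `|1 + t| ^ p ≤ |t| ^ p`. Integrating gives
`∫ |1 + v| ^ p ≤ μ {v ≥ -1} + p ∫_{v ≥ -1} v + ∫ |v| ^ p`. As `v` has mean zero,
`∫_{v ≥ -1} v = -∫_{v < -1} v ≤ ∫_{v < -1} |v|`, and Hölder's inequality against the constant `1`
bounds this by `μ {v < -1} ^ ((p - 1) / p) * (∫ |v| ^ p) ^ (1 / p)`.
-/

open MeasureTheory Real

lemma one_add_rpow_le_of_le_two {p t : ℝ} (hp1 : 1 ≤ p) (hp2 : p ≤ 2) (ht : 0 ≤ t) :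
    (1 + t) ^ p ≤ 1 + p * t + t ^ p := by
  have hp0 : 0 ≤ p := by linarith
  let f : ℝ → ℝ := fun t ↦ 1 + p * t + t ^ p - (1 + t) ^ p
  have hf' : ∀ x ∈ interior (Set.Ici (0 : ℝ)),
      HasDerivAt f (p + p * x ^ (p - 1) - p * (1 + x) ^ (p - 1)) x := by
    intro x hx
    rw [interior_Ici, Set.mem_Ioi] at hx
    have h1 := Real.hasDerivAt_rpow_const (p := p) (Or.inl hx.ne')
    have h2 := ((hasDerivAt_id' x).const_add 1).rpow_const (p := p) (Or.inl (by positivity))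
    exact ((((hasDerivAt_id' x).const_mul p).const_add 1).add h1).sub h2 |>.congr_deriv (by ring)
  have hmono : MonotoneOn f (Set.Ici 0) := by
    refine monotoneOn_of_deriv_nonneg (convex_Ici 0) (by fun_prop (disch := assumption))
      (fun x hx ↦ (hf' x hx).differentiableAt.differentiableWithinAt) fun x hx ↦ ?_
    rw [(hf' x hx).deriv]
    rw [interior_Ici, Set.mem_Ioi] at hx
    -- subadditivity of `s ↦ s ^ (p - 1)`, a concave power
    have := rpow_add_le_add_rpow zero_le_one hx.le (by linarith : 0 ≤ p - 1) (by linarith)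
    rw [one_rpow] at this
    nlinarith
  have := hmono Set.self_mem_Ici ht ht
  simp [f, zero_rpow (by linarith : p ≠ 0)] at this
  linarith

lemma one_sub_rpow_le_of_le_two {p s : ℝ} (hp1 : 1 ≤ p) (hp2 : p ≤ 2) (hs0 : 0 ≤ s)
    (hs1 : s ≤ 1) :
    (1 - s) ^ p ≤ 1 - p * s + s ^ p := by
  have hp0 : 0 ≤ p := by linarith
  let f : ℝ → ℝ := fun s ↦ 1 - p * s + s ^ p - (1 - s) ^ p
  have hf' : ∀ x ∈ interior (Set.Icc (0 : ℝ) 1),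
      HasDerivAt f (-p + p * x ^ (p - 1) + p * (1 - x) ^ (p - 1)) x := by
    intro x hx
    rw [interior_Icc, Set.mem_Ioo] at hx
    have h1 := Real.hasDerivAt_rpow_const (p := p) (Or.inl hx.1.ne')
    have h2 := ((hasDerivAt_id' x).const_sub 1).rpow_const (p := p) (Or.inl (by linarith))
    exact ((((hasDerivAt_id' x).const_mul p).const_sub 1).add h1).sub h2 |>.congr_deriv (by ring)
  have hmono : MonotoneOn f (Set.Icc 0 1) := by
    refine monotoneOn_of_deriv_nonneg (convex_Icc 0 1) (by fun_prop (disch := assumption))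
      (fun x hx ↦ (hf' x hx).differentiableAt.differentiableWithinAt) fun x hx ↦ ?_
    rw [(hf' x hx).deriv]
    rw [interior_Icc, Set.mem_Ioo] at hx
    -- `s ≤ s ^ (p - 1)` on `[0, 1]`, applied to `x` and `1 - x`
    have k1 := self_le_rpow_of_le_one hx.1.le hx.2.le (by linarith : p - 1 ≤ 1)
    have k2 := self_le_rpow_of_le_one (by linarith) (by linarith : 1 - x ≤ 1)
      (by linarith : p - 1 ≤ 1)
    nlinarith
  have := hmono (Set.left_mem_Icc.2 zero_le_one) ⟨hs0, hs1⟩ hs0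
  simp [f, zero_rpow (by linarith : p ≠ 0)] at this
  linarith

lemma abs_one_add_rpow_le_of_le_two {p t : ℝ} (hp1 : 1 ≤ p) (hp2 : p ≤ 2) (ht : -1 ≤ t) :
    |1 + t| ^ p ≤ 1 + p * t + |t| ^ p := by
  rw [abs_of_nonneg (by linarith : 0 ≤ 1 + t)]
  rcases le_or_gt 0 t with ht0 | ht0
  · rw [abs_of_nonneg ht0]
    exact one_add_rpow_le_of_le_two hp1 hp2 ht0
  · rw [abs_of_neg ht0]
    simpa [sub_eq_add_neg] using
      one_sub_rpow_le_of_le_two hp1 hp2 (neg_nonneg.2 ht0.le) (by linarith)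

section
variable {X : Type*} [MeasurableSpace X] {μ : Measure X}

lemma MeasureTheory.MemLp.integrable_abs_rpow {f : X → ℝ} {p : ℝ} (hp : 0 < p)
    (hf : MemLp f (ENNReal.ofReal p) μ) :
    Integrable (fun x ↦ |f x| ^ p) μ := by
  simpa [ENNReal.toReal_ofReal hp.le] using
    hf.integrable_norm_rpow (by simpa using hp) ENNReal.ofReal_ne_top

lemma setIntegral_le_setIntegral_compl_abs_of_integral_eq_zero {f : X → ℝ} {s : Set X}
    (hf : Integrable f μ) (hf0 : ∫ x, f x ∂μ = 0) (hs : NullMeasurableSet s μ) :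
    ∫ x in s, f x ∂μ ≤ ∫ x in sᶜ, |f x| ∂μ := by
  have hsplit := integral_add_compl₀ hs hf
  have habs := (neg_le_abs _).trans (abs_integral_le_integral_abs (f := f) (μ := μ.restrict sᶜ))
  linarith

lemma setIntegral_abs_le_measureReal_rpow_mul [IsFiniteMeasure μ] {f : X → ℝ} {p : ℝ}
    (hp : 1 < p) (hf : MemLp f (ENNReal.ofReal p) μ) (s : Set X) :
    ∫ x in s, |f x| ∂μ ≤ μ.real s ^ ((p - 1) / p) * (∫ x, |f x| ^ p ∂μ) ^ (1 / p) := by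
  have hHolder := integral_mul_le_Lp_mul_Lq_of_nonneg (Real.HolderConjugate.conjExponent hp)
    (.of_forall fun x ↦ abs_nonneg (f x)) (.of_forall fun _ ↦ zero_le_one)
    (hf.abs.restrict s) (memLp_const (1 : ℝ))
  simp only [mul_one, one_rpow, integral_const, smul_eq_mul, measureReal_restrict_apply_univ,
    Real.conjExponent, one_div_div] at hHolder
  have hrestrict : ∫ x in s, |f x| ^ p ∂μ ≤ ∫ x, |f x| ^ p ∂μ :=
    setIntegral_le_integral (hf.integrable_abs_rpow (by linarith))
      (.of_forall fun x ↦ by positivity)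
  calc ∫ x in s, |f x| ∂μ ≤ (∫ x in s, |f x| ^ p ∂μ) ^ (1 / p) * μ.real s ^ ((p - 1) / p) :=
        hHolder
    _ ≤ (∫ x, |f x| ^ p ∂μ) ^ (1 / p) * μ.real s ^ ((p - 1) / p) := by gcongr
    _ = _ := mul_comm _ _

lemma integral_abs_one_add_rpow_le [IsFiniteMeasure μ] {v : X → ℝ} {p : ℝ} (hp1 : 1 ≤ p)
    (hp2 : p ≤ 2) (hv : MemLp v (ENNReal.ofReal p) μ) :
    ∫ x, |1 + v x| ^ p ∂μ ≤
      μ.real {x | -1 ≤ v x} + p * ∫ x in {x | -1 ≤ v x}, v x ∂μ + ∫ x, |v x| ^ p ∂μ := by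
  set A := {x | -1 ≤ v x}
  have hp0 : 0 < p := by linarith
  have hvint : Integrable v μ := hv.integrable (ENNReal.one_le_ofReal.2 hp1)
  have hvp : Integrable (fun x ↦ |v x| ^ p) μ := hv.integrable_abs_rpow hp0
  have hA : NullMeasurableSet A μ :=
    hv.1.aemeasurable.nullMeasurableSet_preimage measurableSet_Ici
  have hind : Integrable (A.indicator fun x ↦ 1 + p * v x) μ :=
    ((integrable_const 1).add (hvint.const_mul p)).indicator₀ hA
  have hpointwise : ∀ x, |1 + v x| ^ p ≤ A.indicator (fun x ↦ 1 + p * v x) x + |v x| ^ p := by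
    intro x
    by_cases hx : -1 ≤ v x
    · simpa [A, hx] using abs_one_add_rpow_le_of_le_two hp1 hp2 hx
    · have : |1 + v x| ≤ |v x| := by
        rw [abs_of_neg (by linarith), abs_of_neg (by linarith)]
        linarith
      simpa [A, hx] using rpow_le_rpow (abs_nonneg _) this hp0.le
  calc ∫ x, |1 + v x| ^ p ∂μ ≤ ∫ x, (A.indicator (fun x ↦ 1 + p * v x) x + |v x| ^ p) ∂μ :=
        integral_mono_of_nonneg (.of_forall fun x ↦ by positivity) (hind.add hvp)
          (.of_forall hpointwise)
    _ = μ.real A + p * ∫ x in A, v x ∂μ + ∫ x, |v x| ^ p ∂μ := by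
        rw [integral_add hind hvp, integral_indicator₀ hA,
          integral_add (integrable_const 1).integrableOn (hvint.const_mul p).integrableOn,
          integral_const_mul, setIntegral_const, smul_eq_mul, mul_one]
end

theorem stmt_6_general {X : Type*} [MeasurableSpace X] (μ : Measure X)
    [IsFiniteMeasure μ] (p : ℝ) (hp1 : 1 < p) (hp2 : p < 2) (v : X → ℝ)
    (hv : MemLp v (ENNReal.ofReal p) μ)
    (hmean : ∫ x, v x ∂μ = 0) :
    ∫ x, |1 + v x| ^ p ∂μ ≤
      (μ {x | -1 ≤ v x}).toReal + ∫ x, |v x| ^ p ∂μ +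
        p * (μ {x | v x < -1}).toReal ^ ((p - 1) / p) *
          (∫ x, |v x| ^ p ∂μ) ^ (1 / p) := by
  set A := {x | -1 ≤ v x}
  have hA : NullMeasurableSet A μ :=
    hv.1.aemeasurable.nullMeasurableSet_preimage measurableSet_Ici
  have hcompl : {x | v x < -1} = Aᶜ := by ext; simp [A]
  have hA_integral :
      ∫ x in A, v x ∂μ ≤ μ.real Aᶜ ^ ((p - 1) / p) * (∫ x, |v x| ^ p ∂μ) ^ (1 / p) :=
    (setIntegral_le_setIntegral_compl_abs_of_integral_eq_zero
      (hv.integrable (ENNReal.one_le_ofReal.2 hp1.le)) hmean hA).trans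
      (setIntegral_abs_le_measureReal_rpow_mul hp1 hv _)
  calc ∫ x, |1 + v x| ^ p ∂μ
      ≤ μ.real A + p * ∫ x in A, v x ∂μ + ∫ x, |v x| ^ p ∂μ :=
        integral_abs_one_add_rpow_le hp1.le hp2.le hv
    _ ≤ μ.real A + p * (μ.real Aᶜ ^ ((p - 1) / p) * (∫ x, |v x| ^ p ∂μ) ^ (1 / p)) +
          ∫ x, |v x| ^ p ∂μ := by gcongr
    _ = _ := by rw [hcompl, measureReal_def, measureReal_def]; ring

theorem stmt_6 {X : Type*} [MeasurableSpace X] (μ : Measure X)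
    [IsFiniteMeasure μ] (m₀ : ℝ) (hm₀ : m₀ = (μ Set.univ).toReal)
    (hm₀pos : 0 < m₀) (p : ℝ) (hp1 : 1 < p) (hp2 : p < 2) (v : X → ℝ)
    (hv : MemLp v (ENNReal.ofReal p) μ)
    (hmean : ∫ x, v x ∂μ = 0) :
    ∫ x, |1 + v x| ^ p ∂μ ≤
      (μ {x | -1 ≤ v x}).toReal + ∫ x, |v x| ^ p ∂μ +
        p * (μ {x | v x < -1}).toReal ^ ((p - 1) / p) *
          (∫ x, |v x| ^ p ∂μ) ^ (1 / p) :=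
  stmt_6_general μ p hp1 hp2 v hv hmean
end

section
/- Let (X, μ) be a measure space with finite total mass m₀ := μ(X) ∈ (0, ∞), let p be real with 1 < p < 2, and let v : X → ℝ be a function in L^p(μ) with ∫_X v dμ = 0. If m₀^{1/p} ≥ (p−1) (∫_X |v|^p dμ)^{1/p}, then ∫_X |1 + v|^p dμ ≤ m₀ + (1 + p (p−1)^{p−1}) ∫_X |v|^p dμ. -/
open MeasureTheory Real

/-!
The inequality is the integral of the pointwise bound
`|1 + t| ^ p ≤ 1 + p t + (1 + p (p - 1) ^ (p - 1)) |t| ^ p` (for `1 < p ≤ 2` and all real `t`),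
whose linear term integrates to zero. For `t ≥ -1` the bound follows from
`(1 + t) ^ p ≤ 1 + p t + |t| ^ p`, proved by monotonicity: the derivative is nonnegative because
`s ↦ s ^ (p - 1)` is subadditive on `[0, ∞)` and dominates the identity on `[0, 1]`.
For `t < -1` one has `|1 + t| ≤ |t|`, and the linear term is absorbed by the Young-type bound
`p s - 1 ≤ (p - 1) ^ (p - 1) s ^ p`, which is Bernoulli's inequality at `(p - 1) s`.
-/

namespace Real

lemma mul_sub_one_le_rpow_sub_one_mul_rpow {p s : ℝ} (hp : 1 < p) (hs : 0 ≤ s) :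
    p * s - 1 ≤ (p - 1) ^ (p - 1) * s ^ p := by
  have hp1 : 0 < p - 1 := by linarith
  have bernoulli :=
    one_add_mul_self_le_rpow_one_add (s := (p - 1) * s - 1) (by nlinarith) hp.le
  have hpow : ((p - 1) * s) ^ p = (p - 1) * ((p - 1) ^ (p - 1) * s ^ p) := by
    rw [mul_rpow hp1.le hs, rpow_sub_one hp1.ne']
    field_simp
  rw [add_sub_cancel, hpow] at bernoulli
  nlinarith

lemma one_add_rpow_le {p t : ℝ} (hp1 : 1 ≤ p) (hp2 : p ≤ 2) (ht : 0 ≤ t) :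
    (1 + t) ^ p ≤ 1 + p * t + t ^ p := by
  let f : ℝ → ℝ := fun t => 1 + p * t + t ^ p - (1 + t) ^ p
  have hf (s : ℝ) : HasDerivAt f (p + p * s ^ (p - 1) - p * (1 + s) ^ (p - 1)) s := by
    have h1 := ((hasDerivAt_id' s).const_mul p).const_add 1
    have h2 := (hasDerivAt_id' s).rpow_const (p := p) (Or.inr hp1)
    have h3 := ((hasDerivAt_id' s).const_add 1).rpow_const (p := p) (Or.inr hp1)
    exact ((h1.fun_add h2).fun_sub h3).congr_deriv (by ring)
  have hmono : MonotoneOn f (Set.Ici 0) := by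
    refine monotoneOn_of_hasDerivWithinAt_nonneg (convex_Ici 0)
      (fun s _ => (hf s).continuousAt.continuousWithinAt)
      (fun s _ => (hf s).hasDerivWithinAt) fun s hs => ?_
    rw [interior_Ici] at hs
    have hsub : (1 + s) ^ (p - 1) ≤ 1 + s ^ (p - 1) := by
      simpa using rpow_add_le_add_rpow zero_le_one (le_of_lt hs) (by linarith) (by linarith)
    nlinarith
  have hf0 := hmono Set.self_mem_Ici ht ht
  simp only [f, zero_rpow (by linarith : p ≠ 0), mul_zero, add_zero, one_rpow] at hf0
  linarith

lemma one_sub_rpow_le {p s : ℝ} (hp1 : 1 ≤ p) (hp2 : p ≤ 2) (hs0 : 0 ≤ s) (hs1 : s ≤ 1) :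
    (1 - s) ^ p ≤ 1 - p * s + s ^ p := by
  let g : ℝ → ℝ := fun s => 1 - p * s + s ^ p - (1 - s) ^ p
  have hg (s : ℝ) : HasDerivAt g (-p + p * s ^ (p - 1) + p * (1 - s) ^ (p - 1)) s := by
    have h1 := ((hasDerivAt_id' s).const_mul p).const_sub 1
    have h2 := (hasDerivAt_id' s).rpow_const (p := p) (Or.inr hp1)
    have h3 := ((hasDerivAt_id' s).const_sub 1).rpow_const (p := p) (Or.inr hp1)
    exact ((h1.fun_add h2).fun_sub h3).congr_deriv (by ring)
  have hmono : MonotoneOn g (Set.Icc 0 1) := by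
    refine monotoneOn_of_hasDerivWithinAt_nonneg (convex_Icc 0 1)
      (fun s _ => (hg s).continuousAt.continuousWithinAt)
      (fun s _ => (hg s).hasDerivWithinAt) fun s hs => ?_
    rw [interior_Icc] at hs
    obtain ⟨hs0, hs1⟩ := hs
    have h1 : s ≤ s ^ (p - 1) := by
      simpa using rpow_le_rpow_of_exponent_ge hs0 hs1.le (by linarith : p - 1 ≤ 1)
    have h2 : 1 - s ≤ (1 - s) ^ (p - 1) := by
      simpa using rpow_le_rpow_of_exponent_ge (by linarith : 0 < 1 - s) (by linarith)
        (by linarith : p - 1 ≤ 1)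
    nlinarith
  have hg0 := hmono (Set.left_mem_Icc.2 zero_le_one) ⟨hs0, hs1⟩ hs0
  simp only [g, zero_rpow (by linarith : p ≠ 0), mul_zero, sub_zero, add_zero, one_rpow] at hg0
  linarith

lemma abs_one_add_rpow_le {p : ℝ} (hp1 : 1 < p) (hp2 : p ≤ 2) (t : ℝ) :
    |1 + t| ^ p ≤ 1 + p * t + (1 + p * (p - 1) ^ (p - 1)) * |t| ^ p := by
  have hδ : 0 ≤ p * (p - 1) ^ (p - 1) * |t| ^ p := by
    have := rpow_nonneg (by linarith : (0 : ℝ) ≤ p - 1) (p - 1)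
    positivity
  rcases le_or_gt 0 t with ht | ht
  · rw [abs_of_nonneg ht] at hδ ⊢
    rw [abs_of_nonneg (by linarith)]
    linarith [one_add_rpow_le hp1.le hp2 ht]
  rw [abs_of_neg ht] at hδ ⊢
  rcases le_or_gt (-1) t with ht1 | ht1
  · have := one_sub_rpow_le hp1.le hp2 (neg_nonneg.2 ht.le) (by linarith)
    rw [sub_neg_eq_add] at this
    rw [abs_of_nonneg (by linarith)]
    linarith
  · have hle : |1 + t| ^ p ≤ (-t) ^ p :=
      rpow_le_rpow (abs_nonneg _) (by rw [abs_of_neg (by linarith)]; linarith) (by linarith)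
    have young := mul_sub_one_le_rpow_sub_one_mul_rpow hp1 (neg_nonneg.2 ht.le)
    have : (p - 1) ^ (p - 1) * (-t) ^ p ≤ p * (p - 1) ^ (p - 1) * (-t) ^ p := by
      have := rpow_nonneg (by linarith : (0 : ℝ) ≤ p - 1) (p - 1)
      have := rpow_nonneg (neg_nonneg.2 ht.le) p
      nlinarith
    linarith

end Real

theorem stmt_10_general {X : Type*} [MeasurableSpace X] (μ : Measure X)
    [IsFiniteMeasure μ] (m₀ : ℝ) (hm₀ : m₀ = (μ Set.univ).toReal)
    (p : ℝ) (hp1 : 1 < p) (hp2 : p < 2) (v : X → ℝ)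
    (hv : MemLp v (ENNReal.ofReal p) μ)
    (hmean : ∫ x, v x ∂μ = 0) :
    ∫ x, |1 + v x| ^ p ∂μ ≤
      m₀ + (1 + p * (p - 1) ^ (p - 1)) * ∫ x, |v x| ^ p ∂μ := by
  set C := 1 + p * (p - 1) ^ (p - 1)
  have hp0 : ENNReal.ofReal p ≠ 0 := by simp only [ne_eq, ENNReal.ofReal_eq_zero, not_le]; linarith
  have hpp : (ENNReal.ofReal p).toReal = p := ENNReal.toReal_ofReal (by linarith)
  have hpow {f : X → ℝ} (hf : MemLp f (ENNReal.ofReal p) μ) :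
      Integrable (fun x => |f x| ^ p) μ := by
    simpa only [hpp, Real.norm_eq_abs] using hf.integrable_norm_rpow hp0 ENNReal.ofReal_ne_top
  have hv1 : Integrable v μ := hv.integrable (by simpa using hp1.le)
  have hlin : Integrable (fun x => 1 + p * v x) μ := (integrable_const 1).fun_add (hv1.const_mul p)
  calc ∫ x, |1 + v x| ^ p ∂μ ≤ ∫ x, (1 + p * v x + C * |v x| ^ p) ∂μ :=
        integral_mono (hpow ((memLp_const (1 : ℝ)).add hv)) (hlin.fun_add ((hpow hv).const_mul C))
          fun x => abs_one_add_rpow_le hp1 hp2.le (v x)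
    _ = m₀ + C * ∫ x, |v x| ^ p ∂μ := by
        rw [integral_add hlin ((hpow hv).const_mul C), integral_add (integrable_const 1)
          (hv1.const_mul p), integral_const, integral_const_mul, integral_const_mul, hmean, hm₀]
        simp [Measure.real]

theorem stmt_10 {X : Type*} [MeasurableSpace X] (μ : Measure X)
    [IsFiniteMeasure μ] (m₀ : ℝ) (hm₀ : m₀ = (μ Set.univ).toReal)
    (hm₀pos : 0 < m₀) (p : ℝ) (hp1 : 1 < p) (hp2 : p < 2) (v : X → ℝ)
    (hv : MemLp v (ENNReal.ofReal p) μ)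
    (hmean : ∫ x, v x ∂μ = 0)
    (hcase : (p - 1) * (∫ x, |v x| ^ p ∂μ) ^ (1 / p) ≤ m₀ ^ (1 / p)) :
    ∫ x, |1 + v x| ^ p ∂μ ≤
      m₀ + (1 + p * (p - 1) ^ (p - 1)) * ∫ x, |v x| ^ p ∂μ :=
  stmt_10_general μ m₀ hm₀ p hp1 hp2 v hv hmean
end
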